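/- arXiv:2011.11774 — 2 statements merged into one kernel-verified Lean document; each statement's English description precedes it below -/
import Mathlib

section
/- Let P be a phylogenetic collection of partitions of N. Then the graph G_P (with vertex set N ∪ P, edges between p,q ∈ P iff some A satisfies A ∈ p and N\A ∈ q, and edges between p ∈ P and i ∈ N iff {i} ∈ p) is a phylogenetic tree whose leaf set is N, i.e., it is a tree, its leaves are exactly the elements of N, and it has no vertex of degree 2. -/
open Set

/-- A phylogenetic collection of partitions of (the finite set) `α`:
(P1) every partition has at least 3 parts; (P2) every singleton is a part of some
partition; (P3) every subset is a part of at most one partition; (P4) the complement of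
every part of cardinality at least 2 is also a part of some partition. -/
def IsPhyloP {α : Type*} (P : Set (Set (Set α))) : Prop :=
  (∀ p ∈ P, Setoid.IsPartition p ∧ 3 ≤ p.ncard) ∧
  (∀ i : α, ∃ p ∈ P, ({i} : Set α) ∈ p) ∧
  (∀ A : Set α, ∀ p ∈ P, ∀ q ∈ P, A ∈ p → A ∈ q → p = q) ∧
  (∀ p ∈ P, ∀ A ∈ p, 2 ≤ A.ncard → ∃ q ∈ P, Aᶜ ∈ q)

/-- The adjacency relation of the graph `G_P` on the vertex set `N ∪ P`:
two partitions `p, q` are adjacent iff there is a set `A` with `A ∈ p` and `N \ A ∈ q`;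
a partition `p` and an element `i` are adjacent iff `{i} ∈ p`; no two elements of `N`
are adjacent. -/
def GPAdj {α : Type*} (P : Set (Set (Set α))) : α ⊕ ↥P → α ⊕ ↥P → Prop
  | Sum.inl _, Sum.inl _ => False
  | Sum.inl i, Sum.inr p => ({i} : Set α) ∈ p.1
  | Sum.inr p, Sum.inl i => ({i} : Set α) ∈ p.1
  | Sum.inr p, Sum.inr q => p ≠ q ∧ ∃ A : Set α, A ∈ p.1 ∧ Aᶜ ∈ q.1

/-- The graph `G_P` with vertex set `N ∪ P`. -/
def GP {α : Type*} (P : Set (Set (Set α))) : SimpleGraph (α ⊕ ↥P) where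
  Adj := GPAdj P
  symm := by
    constructor
    rintro (i | p) (j | q) h
    · exact h.elim
    · exact h
    · exact h
    · obtain ⟨hne, A, hA, hAc⟩ := h
      exact ⟨hne.symm, Aᶜ, hAc, by rwa [compl_compl]⟩
  loopless := by
    constructor
    rintro (i | p) h
    · exact h
    · exact h.1 rfl

/-!
Root `G_P` at a leaf `i₀` and give each partition `p` the rank `|A|`, where `A` is its part
containing `i₀`. If `|A| = 1` then `p` is adjacent to `i₀`; otherwise the unique partition `q`
with `Aᶜ ∈ q` is adjacent to `p`, and its part containing `i₀` is a proper subset of `A`.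
This parent map strictly lowers the rank and every edge joins a vertex to its parent, so the
non-root vertices are in bijection with the edges and `G_P` is a connected graph with one edge
fewer than vertices, i.e. a tree. A partition `p` has a distinct neighbour for each of its
(at least three) parts, and an element `i` has the single neighbour containing `{i}`.
-/

namespace SimpleGraph

variable {V : Type*} {G : SimpleGraph V} {r : V} {parent : V → V} {rank : V → ℕ}

theorem reachable_of_rank_parent_lt (hlt : ∀ v ≠ r, rank (parent v) < rank v)
    (hadj : ∀ v ≠ r, G.Adj v (parent v)) (v : V) : G.Reachable v r := by
  induction v using (measure rank).wf.induction with
  | _ v ih =>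
    by_cases hv : v = r
    · exact hv ▸ Reachable.refl _
    · exact (hadj v hv).reachable.trans (ih _ (hlt v hv))

theorem isTree_of_rank_parent_lt [Finite V] (hlt : ∀ v ≠ r, rank (parent v) < rank v)
    (hadj : ∀ v ≠ r, G.Adj v (parent v))
    (hedge : ∀ u v, G.Adj u v → (u ≠ r ∧ parent u = v) ∨ (v ≠ r ∧ parent v = u)) :
    G.IsTree := by
  classical
  have : Nonempty V := ⟨r⟩
  have hconn : G.Connected := ⟨fun u v =>
    (reachable_of_rank_parent_lt hlt hadj u).trans (reachable_of_rank_parent_lt hlt hadj v).symm⟩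
  let toEdge : {v // v ≠ r} → G.edgeSet := fun v => ⟨s(v, parent v), hadj v v.2⟩
  have hbij : Function.Bijective toEdge := by
    constructor
    · rintro ⟨v, hv⟩ ⟨w, hw⟩ h
      have hsym : s(v, parent v) = s(w, parent w) := congrArg Subtype.val h
      rcases Sym2.eq_iff.mp hsym with ⟨rfl, -⟩ | ⟨hvw, hwv⟩
      · rfl
      · have hw_lt_v : rank w < rank v := hwv ▸ hlt v hv
        have hv_lt_w : rank v < rank w := hvw ▸ hlt w hw
        omega
    · rintro ⟨e, he⟩
      induction e using Sym2.ind with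
      | _ u v =>
        rcases hedge u v he with ⟨hu, rfl⟩ | ⟨hv, rfl⟩
        · exact ⟨⟨u, hu⟩, rfl⟩
        · exact ⟨⟨v, hv⟩, Subtype.ext Sym2.eq_swap⟩
  refine isTree_iff_connected_and_card.mpr ⟨hconn, ?_⟩
  rw [← Nat.card_eq_of_bijective toEdge hbij, ← Finite.card_option,
    Nat.card_congr (Equiv.optionSubtypeNe r)]

end SimpleGraph

noncomputable def partOf {α : Type*} (c : Set (Set α)) (i : α) : Set α :=
  Classical.epsilon fun A => A ∈ c ∧ i ∈ A

namespace Setoid.IsPartition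

variable {α : Type*} {c : Set (Set α)}

theorem partOf_mem (hc : IsPartition c) (i : α) : partOf c i ∈ c :=
  (Classical.epsilon_spec (hc.2 i).exists).1

theorem mem_partOf (hc : IsPartition c) (i : α) : i ∈ partOf c i :=
  (Classical.epsilon_spec (hc.2 i).exists).2

theorem partOf_eq (hc : IsPartition c) {A : Set α} {i : α} (hA : A ∈ c) (hi : i ∈ A) :
    partOf c i = A :=
  eq_of_mem_eqv_class hc.2 (hc.partOf_mem i) (hc.mem_partOf i) hA hi

end Setoid.IsPartition

namespace GP

variable {α : Type*} (P : Set (Set (Set α))) (i₀ : α)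

open Classical in
noncomputable def parent : α ⊕ ↥P → α ⊕ ↥P
  | .inl i => if h : ∃ p : ↥P, {i} ∈ p.1 then .inr h.choose else .inl i
  | .inr p => if h : ∃ q : ↥P, (partOf p.1 i₀)ᶜ ∈ q.1 then .inr h.choose else .inl i₀

open Classical in
noncomputable def rank : α ⊕ ↥P → ℕ
  | .inl i => if i = i₀ then 0 else Nat.card α + 1
  | .inr p => (partOf p.1 i₀).ncard

/-- For a neighbour `v` of a partition `p`, the part `A` of `p` on the side of `v`. -/
def Faces (A : Set α) : α ⊕ ↥P → Prop
  | .inl i => A = {i}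
  | .inr q => Aᶜ ∈ q.1

end GP

namespace IsPhyloP

variable {α : Type*} {P : Set (Set (Set α))} {p q : ↥P} {A B : Set α}

theorem isPartition (hP : IsPhyloP P) (p : ↥P) : Setoid.IsPartition p.1 := (hP.1 p p.2).1

theorem not_subset_pair (hP : IsPhyloP P) (p : ↥P) (X Y : Set α) : ¬ p.1 ⊆ {X, Y} := by
  intro h
  have h3 := (hP.1 p p.2).2
  have hle := (ncard_le_ncard h).trans (ncard_insert_le X {Y})
  rw [ncard_singleton] at hle
  omega

theorem eq_of_mem (hP : IsPhyloP P) (hp : A ∈ p.1) (hq : A ∈ q.1) : p = q :=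
  Subtype.ext (hP.2.2.1 A p p.2 q q.2 hp hq)

theorem compl_notMem (hP : IsPhyloP P) (hA : A ∈ p.1) : Aᶜ ∉ p.1 := by
  intro hAc
  refine hP.not_subset_pair p A Aᶜ fun B hB => ?_
  obtain ⟨b, hb⟩ := Setoid.nonempty_of_mem_partition (hP.isPartition p) hB
  by_cases hbA : b ∈ A
  · exact .inl (Setoid.eq_of_mem_eqv_class (hP.isPartition p).2 hB hb hA hbA)
  · exact .inr (Setoid.eq_of_mem_eqv_class (hP.isPartition p).2 hB hb hAc hbA)

theorem ne_of_compl_mem (hP : IsPhyloP P) (hA : A ∈ p.1) (hAc : Aᶜ ∈ q.1) : p ≠ q := by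
  rintro rfl
  exact hP.compl_notMem hA hAc

theorem two_le_ncard_of_compl_mem [Finite α] (hP : IsPhyloP P) (hAc : Aᶜ ∈ q.1) :
    2 ≤ A.ncard := by
  by_contra! h
  have hA : A.Subsingleton := ncard_le_one_iff_subsingleton.mp (by omega)
  refine hP.not_subset_pair q Aᶜ A fun B hB => ?_
  by_cases hBA : B = Aᶜ
  · exact .inl hBA
  · have hsub : B ⊆ A :=
      disjoint_compl_right_iff_subset.mp ((hP.isPartition q).pairwiseDisjoint hB hAc hBA)
    obtain ⟨b, hb⟩ := Setoid.nonempty_of_mem_partition (hP.isPartition q) hB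
    exact .inr (((hA.anti hsub).eq_singleton_of_mem hb).trans
      (hA.eq_singleton_of_mem (hsub hb)).symm)

theorem exists_compl_mem (hP : IsPhyloP P) (hA : A ∈ p.1) (h2 : 2 ≤ A.ncard) :
    ∃ q : ↥P, Aᶜ ∈ q.1 := by
  obtain ⟨q, hq, hAc⟩ := hP.2.2.2 p p.2 A hA h2
  exact ⟨⟨q, hq⟩, hAc⟩

theorem ssubset_of_compl_mem (hP : IsPhyloP P) (hA : A ∈ p.1) (hAc : Aᶜ ∈ q.1)
    (hB : B ∈ q.1) (hBA : B ≠ Aᶜ) : B ⊂ A := by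
  refine ssubset_iff_subset_ne.mpr ⟨?_, ?_⟩
  · exact disjoint_compl_right_iff_subset.mp ((hP.isPartition q).pairwiseDisjoint hB hAc hBA)
  · rintro rfl
    exact hP.ne_of_compl_mem hA hAc (hP.eq_of_mem hA hB)

theorem parent_inl (hP : IsPhyloP P) (i₀ : α) {i : α} (h : {i} ∈ p.1) :
    GP.parent P i₀ (.inl i) = .inr p := by
  have hex : ∃ p : ↥P, {i} ∈ p.1 := ⟨p, h⟩
  rw [GP.parent, dif_pos hex, hP.eq_of_mem hex.choose_spec h]

theorem parent_inr_of_compl_mem (hP : IsPhyloP P) {i₀ : α} (hA : A ∈ p.1) (hi₀ : i₀ ∈ A)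
    (hAc : Aᶜ ∈ q.1) : GP.parent P i₀ (.inr p) = .inr q := by
  rw [← (hP.isPartition p).partOf_eq hA hi₀] at hAc
  have hex : ∃ q : ↥P, (partOf p.1 i₀)ᶜ ∈ q.1 := ⟨q, hAc⟩
  rw [GP.parent, dif_pos hex, hP.eq_of_mem hex.choose_spec hAc]

theorem parent_inr_of_singleton_mem [Finite α] (hP : IsPhyloP P) {i₀ : α} (h : {i₀} ∈ p.1) :
    GP.parent P i₀ (.inr p) = .inl i₀ := by
  have hpart : partOf p.1 i₀ = {i₀} := (hP.isPartition p).partOf_eq h rfl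
  have hex : ¬ ∃ q : ↥P, (partOf p.1 i₀)ᶜ ∈ q.1 := by
    rintro ⟨q, hq⟩
    have := hP.two_le_ncard_of_compl_mem (hpart ▸ hq)
    rw [ncard_singleton] at this
    omega
  rw [GP.parent, dif_neg hex]

theorem parent_inr_cases [Finite α] (hP : IsPhyloP P) (i₀ : α) (p : ↥P) :
    (∃ q : ↥P, (partOf p.1 i₀)ᶜ ∈ q.1 ∧ GP.parent P i₀ (.inr p) = .inr q) ∨
      ({i₀} ∈ p.1 ∧ GP.parent P i₀ (.inr p) = .inl i₀) := by
  have hA := (hP.isPartition p).partOf_mem i₀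
  have hi₀ := (hP.isPartition p).mem_partOf i₀
  by_cases h2 : 2 ≤ (partOf p.1 i₀).ncard
  · obtain ⟨q, hq⟩ := hP.exists_compl_mem hA h2
    exact .inl ⟨q, hq, hP.parent_inr_of_compl_mem hA hi₀ hq⟩
  · have hsub : (partOf p.1 i₀).Subsingleton := ncard_le_one_iff_subsingleton.mp (by omega)
    rw [hsub.eq_singleton_of_mem hi₀] at hA
    exact .inr ⟨hA, hP.parent_inr_of_singleton_mem hA⟩

theorem adj_parent [Finite α] (hP : IsPhyloP P) (i₀ : α) (v : α ⊕ ↥P) :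
    (GP P).Adj v (GP.parent P i₀ v) := by
  rcases v with i | p
  · obtain ⟨p, hp, hi⟩ := hP.2.1 i
    rw [hP.parent_inl i₀ (p := ⟨p, hp⟩) hi]
    exact hi
  · rcases hP.parent_inr_cases i₀ p with ⟨q, hq, hpar⟩ | ⟨h, hpar⟩
    · have hA := (hP.isPartition p).partOf_mem i₀
      rw [hpar]
      exact ⟨hP.ne_of_compl_mem hA hq, _, hA, hq⟩
    · rw [hpar]
      exact h

theorem rank_parent_lt [Finite α] (hP : IsPhyloP P) (i₀ : α) (v : α ⊕ ↥P)
    (hv : v ≠ .inl i₀) : GP.rank P i₀ (GP.parent P i₀ v) < GP.rank P i₀ v := by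
  rcases v with i | p
  · have hi : i ≠ i₀ := fun h => hv (h ▸ rfl)
    obtain ⟨p, hp, hpi⟩ := hP.2.1 i
    rw [hP.parent_inl i₀ (p := ⟨p, hp⟩) hpi]
    simp only [GP.rank, if_neg hi]
    exact Nat.lt_succ_of_le (ncard_le_card _)
  · have hi₀ := (hP.isPartition p).mem_partOf i₀
    rcases hP.parent_inr_cases i₀ p with ⟨q, hq, hpar⟩ | ⟨-, hpar⟩
    · have hqi₀ := (hP.isPartition q).mem_partOf i₀
      rw [hpar]
      exact ncard_lt_ncard <| hP.ssubset_of_compl_mem ((hP.isPartition p).partOf_mem i₀) hq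
        ((hP.isPartition q).partOf_mem i₀) fun h => (h ▸ hqi₀) hi₀
    · rw [hpar]
      simpa [GP.rank] using (ncard_pos (toFinite _)).mpr ⟨i₀, hi₀⟩

theorem parent_eq_of_adj [Finite α] (hP : IsPhyloP P) (i₀ : α) {u v : α ⊕ ↥P}
    (h : (GP P).Adj u v) :
    (u ≠ .inl i₀ ∧ GP.parent P i₀ u = v) ∨ (v ≠ .inl i₀ ∧ GP.parent P i₀ v = u) := by
  have leaf : ∀ (i : α) (p : ↥P), {i} ∈ p.1 →
      ((Sum.inl i : α ⊕ ↥P) ≠ .inl i₀ ∧ GP.parent P i₀ (.inl i) = .inr p) ∨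
        (Sum.inr p ≠ .inl i₀ ∧ GP.parent P i₀ (.inr p) = .inl i) := by
    intro i p hi
    by_cases hii₀ : i = i₀
    · subst hii₀
      exact .inr ⟨Sum.inr_ne_inl, hP.parent_inr_of_singleton_mem hi⟩
    · exact .inl ⟨fun h => hii₀ (Sum.inl_injective h), hP.parent_inl i₀ hi⟩
  rcases u with i | p <;> rcases v with j | q
  · exact h.elim
  · exact leaf i q h
  · exact (leaf j p h).symm
  · obtain ⟨-, A, hA, hAc⟩ := h
    by_cases hi₀ : i₀ ∈ A
    · exact .inl ⟨Sum.inr_ne_inl, hP.parent_inr_of_compl_mem hA hi₀ hAc⟩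
    · rw [← compl_compl A] at hA
      exact .inr ⟨Sum.inr_ne_inl, hP.parent_inr_of_compl_mem hAc hi₀ hA⟩

theorem isTree_GP [Finite α] (hP : IsPhyloP P) (i₀ : α) : (GP P).IsTree :=
  SimpleGraph.isTree_of_rank_parent_lt (hP.rank_parent_lt i₀) (fun v _ => hP.adj_parent i₀ v)
    (fun _ _ => hP.parent_eq_of_adj i₀)

theorem ncard_neighborSet_inl (hP : IsPhyloP P) (i : α) :
    ((GP P).neighborSet (.inl i)).ncard = 1 := by
  obtain ⟨p, hp, hi⟩ := hP.2.1 i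
  refine ncard_eq_one.mpr ⟨.inr ⟨p, hp⟩, ?_⟩
  ext (j | q)
  · exact iff_of_false (fun h => h) Sum.inl_ne_inr
  · exact ⟨fun h => congrArg _ (hP.eq_of_mem h hi), fun h => (Sum.inr_injective h) ▸ hi⟩

theorem exists_adj_faces [Finite α] (hP : IsPhyloP P) (hA : A ∈ p.1) :
    ∃ v, (GP P).Adj (.inr p) v ∧ GP.Faces P A v := by
  by_cases h2 : 2 ≤ A.ncard
  · obtain ⟨q, hq⟩ := hP.exists_compl_mem hA h2
    exact ⟨.inr q, ⟨hP.ne_of_compl_mem hA hq, A, hA, hq⟩, hq⟩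
  · have hne := Setoid.nonempty_of_mem_partition (hP.isPartition p) hA
    have h1 : A.ncard = 1 := by
      have := (ncard_pos (toFinite A)).mpr hne
      omega
    obtain ⟨i, rfl⟩ := ncard_eq_one.mp h1
    exact ⟨.inl i, hA, rfl⟩

theorem eq_of_faces (hP : IsPhyloP P) (hA : A ∈ p.1) (hB : B ∈ p.1) {v : α ⊕ ↥P}
    (hAv : GP.Faces P A v) (hBv : GP.Faces P B v) : A = B := by
  rcases v with i | q
  · exact hAv.trans hBv.symm
  · by_contra hAB
    have hBA : B ⊆ Aᶜ :=
      ((hP.isPartition p).pairwiseDisjoint hB hA (Ne.symm hAB)).subset_compl_right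
    have hAB' : Aᶜ ⊆ B := by
      simpa using ((hP.isPartition q).pairwiseDisjoint hAv hBv
        (compl_injective.ne hAB)).subset_compl_right
    exact hP.compl_notMem hA (hBA.antisymm hAB' ▸ hB)

theorem three_le_ncard_neighborSet_inr [Finite α] (hP : IsPhyloP P) (p : ↥P) :
    3 ≤ ((GP P).neighborSet (.inr p)).ncard := by
  have : Nonempty (α ⊕ ↥P) := ⟨.inr p⟩
  choose! f hf_adj hf_faces using fun A (hA : A ∈ p.1) => hP.exists_adj_faces hA
  calc 3 ≤ p.1.ncard := (hP.1 p p.2).2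
    _ ≤ _ := ncard_le_ncard_of_injOn f hf_adj fun A hA B hB hfAB =>
      hP.eq_of_faces hA hB (hf_faces A hA) (hfAB ▸ hf_faces B hB)

end IsPhyloP

/-- for a phylogenetic collection of partitions `P`, the graph `G_P` is a
phylogenetic tree with leaf set `N`: it is a tree, no vertex has degree 2, and its
leaves (degree-1 vertices) are exactly the elements of `N`. -/
theorem stmt8 {α : Type*} [Fintype α] (hcard : 3 ≤ Fintype.card α)
    (P : Set (Set (Set α))) (hP : IsPhyloP P) :
    (GP P).IsTree ∧ (∀ x : α ⊕ ↥P, ((GP P).neighborSet x).ncard ≠ 2) ∧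
      ∀ x : α ⊕ ↥P, ((GP P).neighborSet x).ncard = 1 ↔ ∃ i : α, x = Sum.inl i := by
  obtain ⟨i₀⟩ : Nonempty α := Fintype.card_pos_iff.mp (by omega)
  refine ⟨hP.isTree_GP i₀, ?_, ?_⟩
  · rintro (i | p)
    · simp [hP.ncard_neighborSet_inl i]
    · have := hP.three_le_ncard_neighborSet_inr p
      omega
  · rintro (i | p)
    · simp [hP.ncard_neighborSet_inl i]
    · have := hP.three_le_ncard_neighborSet_inr p
      exact iff_of_false (by omega) fun ⟨_, h⟩ => Sum.inr_ne_inl h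
end

section
/- Let C be a phylogenetic set of cuts of N and c = (A|B) ∈ C. Define the cut graph G_{C,c} whose vertex set is the union of all clusters of C and singletons of N that are subsets of A, together with all clusters of C and singletons of N that are subsets of B, with edges given by the Hasse diagrams of these two inclusion posets plus an extra edge joining A and B. Then G_{C,c} is a phylogenetic tree whose leaves are exactly the singletons {i} for i ∈ N. -/
/-
On each side `X` of the cut, the clusters and singletons contained in `X` form a laminar
family with top element `X`: by axiom (C), two of them are disjoint or nested, the fourth
case being excluded because both miss `Xᶜ ≠ ∅`. So every member other than `X` has a unique
cover, and the Hasse diagram is a tree rooted at `X`; the cut graph glues the two rooted trees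
by the edge `A — Aᶜ`. Each edge is a bridge, since the only edge leaving the down-set of a
vertex is the edge to its cover. A singleton is adjacent only to its cover, whereas a cluster
`S` has two distinct children (the first child misses some `k ∈ S`, which lies in another
child) and a neighbour not contained in `S`.
-/

open Set

/-- A phylogenetic set of cuts of `α`, where a cut `(A | Aᶜ)` is represented by the
cluster `A`: every cluster and its complement have cardinality at least 2, the set of
clusters is closed under complement (cuts are unordered), and axiom (C) holds: for any
two cuts, at least one of the four pairwise intersections of their sides is empty. -/
def IsCutSet {α : Type*} (C : Set (Set α)) : Prop :=
  (∀ A ∈ C, 2 ≤ A.ncard ∧ 2 ≤ Aᶜ.ncard ∧ Aᶜ ∈ C) ∧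
  ∀ A ∈ C, ∀ B ∈ C, A ∩ B = ∅ ∨ A ∩ Bᶜ = ∅ ∨ Aᶜ ∩ B = ∅ ∨ Aᶜ ∩ Bᶜ = ∅

/-- `VA C X` is the set of all clusters of `C` and singletons of `α` that are
subsets of `X`. -/
def VA {α : Type*} (C : Set (Set α)) (X : Set α) : Set (Set α) :=
  {S | (S ∈ C ∨ ∃ i : α, S = {i}) ∧ S ⊆ X}

/-- `covIn C X S T` says that `T` covers `S` in the inclusion poset `VA C X`. -/
def covIn {α : Type*} (C : Set (Set α)) (X : Set α) (S T : Set α) : Prop :=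
  S ∈ VA C X ∧ T ∈ VA C X ∧ S ⊂ T ∧ ∀ U ∈ VA C X, ¬(S ⊂ U ∧ U ⊂ T)

/-- The cut graph `G_{C,c}` of the cut `c = (A | Aᶜ)`: its vertices are the clusters and
singletons contained in `A` together with those contained in `Aᶜ`; its edges are the
Hasse-diagram edges of the two inclusion posets, plus one extra edge joining `A`
and `Aᶜ`. -/
def cutGraph {α : Type*} (C : Set (Set α)) (A : Set α) :
    SimpleGraph ↥(VA C A ∪ VA C Aᶜ) where
  Adj S T :=
    covIn C A S.1 T.1 ∨ covIn C A T.1 S.1 ∨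
    covIn C Aᶜ S.1 T.1 ∨ covIn C Aᶜ T.1 S.1 ∨
    (S.1 = A ∧ T.1 = Aᶜ ∧ S ≠ T) ∨ (S.1 = Aᶜ ∧ T.1 = A ∧ S ≠ T)
  symm := by
    refine ⟨?_⟩
    rintro S T (h | h | h | h | ⟨h1, h2, h3⟩ | ⟨h1, h2, h3⟩)
    · exact Or.inr (Or.inl h)
    · exact Or.inl h
    · exact Or.inr (Or.inr (Or.inr (Or.inl h)))
    · exact Or.inr (Or.inr (Or.inl h))
    · exact Or.inr (Or.inr (Or.inr (Or.inr (Or.inr ⟨h2, h1, h3.symm⟩))))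
    · exact Or.inr (Or.inr (Or.inr (Or.inr (Or.inl ⟨h2, h1, h3.symm⟩))))
  loopless := by
    refine ⟨?_⟩
    rintro S (h | h | h | h | ⟨_, _, h⟩ | ⟨_, _, h⟩) <;>
      first
        | exact ssubset_irrefl _ h.2.2.1
        | exact h rfl

namespace SimpleGraph

variable {V : Type*} {G : SimpleGraph V}

theorem isBridge_of_forall_adj_boundary {D : Set V} {v w : V} (hv : v ∈ D) (hw : w ∉ D)
    (h : ∀ ⦃x y⦄, G.Adj x y → x ∈ D → y ∉ D → s(x, y) = s(v, w)) :
    G.IsBridge s(v, w) := by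
  refine isBridge_iff_forall_walk_mem_edges.mpr fun p => ?_
  obtain ⟨d, hd, hx, hy⟩ := p.exists_boundary_dart D hv hw
  rw [← h d.adj hx hy]
  exact List.mem_map_of_mem hd

end SimpleGraph

section Laminar

variable {α : Type*} {C : Set (Set α)} {A X S T U U' : Set α}

lemma mem_VA_self (hX : X ∈ C) : X ∈ VA C X := ⟨Or.inl hX, subset_rfl⟩

lemma singleton_mem_VA {i : α} (hi : i ∈ X) : {i} ∈ VA C X :=
  ⟨Or.inr ⟨i, rfl⟩, singleton_subset_iff.mpr hi⟩

namespace IsCutSet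

lemma compl_mem (hC : IsCutSet C) (hA : A ∈ C) : Aᶜ ∈ C := (hC.1 A hA).2.2

lemma two_le_ncard (hC : IsCutSet C) (hA : A ∈ C) : 2 ≤ A.ncard := (hC.1 A hA).1

lemma nonempty (hC : IsCutSet C) (hA : A ∈ C) : A.Nonempty :=
  nonempty_of_ncard_ne_zero (by have := hC.two_le_ncard hA; omega)

/-- `ncard` vanishes on infinite sets, so a cluster and its complement are finite. -/
lemma finite_of_mem (hC : IsCutSet C) (hA : A ∈ C) : Finite α := by
  have hfin : ∀ {B}, B ∈ C → B.Finite := fun hB =>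
    finite_of_ncard_pos (by have := hC.two_le_ncard hB; omega)
  rw [← finite_univ_iff, ← union_compl_self A]
  exact (hfin hA).union (hfin (hC.compl_mem hA))

lemma nonempty_of_mem_VA (hC : IsCutSet C) (hS : S ∈ VA C X) : S.Nonempty := by
  rcases hS.1 with h | ⟨i, rfl⟩
  exacts [hC.nonempty h, singleton_nonempty i]

lemma notMem_VA_compl (hC : IsCutSet C) (hS : S ∈ VA C X) : S ∉ VA C Xᶜ := fun hS' =>
  (hC.nonempty_of_mem_VA hS).elim fun _ ha => hS'.2 ha (hS.2 ha)

lemma laminar_VA (hC : IsCutSet C) (hX : Xᶜ.Nonempty) (hS : S ∈ VA C X) (hT : T ∈ VA C X) :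
    Disjoint S T ∨ S ⊆ T ∨ T ⊆ S := by
  rcases hS.1 with hSC | ⟨i, rfl⟩
  · rcases hT.1 with hTC | ⟨i, rfl⟩
    · rcases hC.2 S hSC T hTC with h | h | h | h
      · exact Or.inl (disjoint_iff_inter_eq_empty.mpr h)
      · exact Or.inr (Or.inl (disjoint_compl_right_iff_subset.mp
          (disjoint_iff_inter_eq_empty.mpr h)))
      · exact Or.inr (Or.inr (disjoint_compl_left_iff_subset.mp
          (disjoint_iff_inter_eq_empty.mpr h)))
      · obtain ⟨a, ha⟩ := hX
        exact (eq_empty_iff_forall_notMem.mp h a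
          ⟨fun haS => ha (hS.2 haS), fun haT => ha (hT.2 haT)⟩).elim
    · by_cases hi : i ∈ S
      · exact Or.inr (Or.inr (singleton_subset_iff.mpr hi))
      · exact Or.inl (disjoint_singleton_right.mpr hi)
  · by_cases hi : i ∈ T
    · exact Or.inr (Or.inl (singleton_subset_iff.mpr hi))
    · exact Or.inl (disjoint_singleton_left.mpr hi)

lemma covIn_unique (hC : IsCutSet C) (hX : Xᶜ.Nonempty) (hT : covIn C X S T)
    (hU : covIn C X S U) : T = U := by
  rcases hC.laminar_VA hX hT.2.1 hU.2.1 with hd | hTU | hUT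
  · exact ((hC.nonempty_of_mem_VA hT.1).ne_empty
      (disjoint_self.mp (hd.mono hT.2.2.1.subset hU.2.2.1.subset))).elim
  · by_contra hne
    exact hU.2.2.2 T hT.2.1 ⟨hT.2.2.1, hTU.ssubset_of_ne hne⟩
  · by_contra hne
    exact hT.2.2.2 U hU.2.1 ⟨hU.2.2.1, hUT.ssubset_of_ne (Ne.symm hne)⟩

lemma covIn_eq_of_subset_of_not_subset (hC : IsCutSet C) (hX : Xᶜ.Nonempty)
    (hST : covIn C X S T) (hUU' : covIn C X U U') (hUS : U ⊆ S) (hU'S : ¬U' ⊆ S) :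
    U = S ∧ U' = T := by
  have hU : U = S := by
    by_contra hne
    rcases hC.laminar_VA hX hUU'.2.1 hST.1 with hd | h | h
    · exact (hC.nonempty_of_mem_VA hUU'.1).ne_empty
        (disjoint_self.mp (hd.mono hUU'.2.2.1.subset hUS))
    · exact hU'S h
    · exact hUU'.2.2.2 S hST.1
        ⟨hUS.ssubset_of_ne hne, h.ssubset_of_ne fun e => hU'S (e ▸ subset_rfl)⟩
  subst hU
  exact ⟨rfl, hC.covIn_unique hX hUU' hST⟩

end IsCutSet

lemma exists_covIn_of_ne [Finite α] (hX : X ∈ C) (hS : S ∈ VA C X) (hne : S ≠ X) :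
    ∃ T, covIn C X S T := by
  obtain ⟨T, hT, hmin⟩ := (toFinite {T | T ∈ VA C X ∧ S ⊂ T}).exists_minimal
    ⟨X, mem_VA_self hX, hS.2.ssubset_of_ne hne⟩
  exact ⟨T, hS, hT.1, hT.2, fun U hU h => h.2.not_subset (hmin ⟨hU, h.1⟩ h.2.subset)⟩

lemma exists_covIn_mem [Finite α] (hS : S ∈ VA C X) {i : α} (hi : i ∈ S) (hne : {i} ≠ S) :
    ∃ T, covIn C X T S ∧ i ∈ T := by
  obtain ⟨T, hT, hmax⟩ := (toFinite {T | T ∈ VA C X ∧ i ∈ T ∧ T ⊂ S}).exists_maximal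
    ⟨{i}, singleton_mem_VA (hS.2 hi), rfl, (singleton_subset_iff.mpr hi).ssubset_of_ne hne⟩
  refine ⟨T, ⟨hT.1, hS, hT.2.2, fun U hU h => ?_⟩, hT.2.1⟩
  exact h.1.not_subset (hmax ⟨hU, h.1.subset hT.2.1, h.2⟩ h.1.subset)

lemma exists_two_covIn [Finite α] (hS : S ∈ VA C X) (hS2 : 2 ≤ S.ncard) :
    ∃ T₁ T₂, covIn C X T₁ S ∧ covIn C X T₂ S ∧ T₁ ≠ T₂ := by
  have hne : ∀ i, {i} ≠ S := fun i h => by rw [← h, ncard_singleton] at hS2; omega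
  obtain ⟨i, hi⟩ := nonempty_of_ncard_ne_zero (by omega : S.ncard ≠ 0)
  obtain ⟨T₁, h₁, -⟩ := exists_covIn_mem hS hi (hne i)
  obtain ⟨k, hk, hkT₁⟩ := exists_of_ssubset h₁.2.2.1
  obtain ⟨T₂, h₂, hkT₂⟩ := exists_covIn_mem hS hk (hne k)
  exact ⟨T₁, T₂, h₁, h₂, fun h => hkT₁ (h ▸ hkT₂)⟩

end Laminar

section CutGraph

open SimpleGraph

variable {α : Type*} {C : Set (Set α)} {A X : Set α}

lemma side_compl (hX : X = A ∨ X = Aᶜ) : Xᶜ = A ∨ Xᶜ = Aᶜ := by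
  rcases hX with rfl | rfl
  exacts [Or.inr rfl, Or.inl (compl_compl A)]

lemma IsCutSet.mem_of_side (hC : IsCutSet C) (hA : A ∈ C) (hX : X = A ∨ X = Aᶜ) :
    X ∈ C := by
  rcases hX with rfl | rfl
  exacts [hA, hC.compl_mem hA]

lemma mem_vertices_of_side (hX : X = A ∨ X = Aᶜ) {S : Set α} (hS : S ∈ VA C X) :
    S ∈ VA C A ∪ VA C Aᶜ := by
  rcases hX with rfl | rfl
  exacts [Or.inl hS, Or.inr hS]

lemma exists_side_mem_VA (u : ↥(VA C A ∪ VA C Aᶜ)) :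
    ∃ X, (X = A ∨ X = Aᶜ) ∧ u.1 ∈ VA C X :=
  u.2.elim (fun h => ⟨A, Or.inl rfl, h⟩) (fun h => ⟨Aᶜ, Or.inr rfl, h⟩)

lemma cutGraph_adj_iff (hC : IsCutSet C) (hA : A ∈ C) (hX : X = A ∨ X = Aᶜ)
    {u w : ↥(VA C A ∪ VA C Aᶜ)} (hu : u.1 ∈ VA C X) :
    (cutGraph C A).Adj u w ↔
      covIn C X u.1 w.1 ∨ covIn C X w.1 u.1 ∨ (u.1 = X ∧ w.1 = Xᶜ) := by
  have hne : u.1 = X → w.1 = Xᶜ → u ≠ w := fun h1 h2 huw =>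
    have : Nonempty α := (hC.nonempty (hC.mem_of_side hA hX)).to_subtype.map Subtype.val
    ne_compl_self (h1.symm.trans ((congrArg Subtype.val huw).trans h2))
  change (_ ∨ _ ∨ _ ∨ _ ∨ _ ∨ _) ↔ _
  rcases hX with rfl | rfl
  · constructor
    · rintro (h | h | h | h | ⟨h1, h2, -⟩ | ⟨h1, -, -⟩)
      · exact Or.inl h
      · exact Or.inr (Or.inl h)
      · exact (hC.notMem_VA_compl hu h.1).elim
      · exact (hC.notMem_VA_compl hu h.2.1).elim
      · exact Or.inr (Or.inr ⟨h1, h2⟩)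
      · exact (hC.notMem_VA_compl hu (by rw [h1]; exact mem_VA_self (hC.compl_mem hA))).elim
    · rintro (h | h | ⟨h1, h2⟩)
      · exact Or.inl h
      · exact Or.inr (Or.inl h)
      · exact Or.inr (Or.inr (Or.inr (Or.inr (Or.inl ⟨h1, h2, hne h1 h2⟩))))
  · rw [compl_compl]
    constructor
    · rintro (h | h | h | h | ⟨h1, -, -⟩ | ⟨h1, h2, -⟩)
      · exact (hC.notMem_VA_compl h.1 hu).elim
      · exact (hC.notMem_VA_compl h.2.1 hu).elim
      · exact Or.inl h
      · exact Or.inr (Or.inl h)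
      · exact (hC.notMem_VA_compl (by rw [h1]; exact mem_VA_self hA) hu).elim
      · exact Or.inr (Or.inr ⟨h1, h2⟩)
    · rintro (h | h | ⟨h1, h2⟩)
      · exact Or.inr (Or.inr (Or.inl h))
      · exact Or.inr (Or.inr (Or.inr (Or.inl h)))
      · have h2' : w.1 = Aᶜᶜ := h2.trans (compl_compl A).symm
        exact Or.inr (Or.inr (Or.inr (Or.inr (Or.inr ⟨h1, h2, hne h1 h2'⟩))))

lemma cutGraph_adj_of_covIn (hC : IsCutSet C) (hA : A ∈ C) (hX : X = A ∨ X = Aᶜ)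
    {u w : ↥(VA C A ∪ VA C Aᶜ)} (h : covIn C X u.1 w.1) : (cutGraph C A).Adj u w :=
  (cutGraph_adj_iff hC hA hX h.1).mpr (Or.inl h)

lemma cutGraph_reachable_of_mem_VA (hC : IsCutSet C) (hA : A ∈ C) (hX : X = A ∨ X = Aᶜ)
    {r : ↥(VA C A ∪ VA C Aᶜ)} (hr : r.1 = X) (S : Set α) (hS : S ∈ VA C X) :
    (cutGraph C A).Reachable r ⟨S, mem_vertices_of_side hX hS⟩ := by
  have := hC.finite_of_mem hA
  have hXC := hC.mem_of_side hA hX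
  induction S using WellFoundedGT.induction with
  | _ S ih =>
    by_cases hSX : S = X
    · obtain rfl : r = ⟨S, mem_vertices_of_side hX hS⟩ := Subtype.ext (hr.trans hSX.symm)
      rfl
    · obtain ⟨T, hT⟩ := exists_covIn_of_ne hXC hS hSX
      exact (ih T hT.2.2.1 hT.2.1).trans (cutGraph_adj_of_covIn hC hA hX hT).symm.reachable

lemma cutGraph_connected (hC : IsCutSet C) (hA : A ∈ C) : (cutGraph C A).Connected := by
  let a : ↥(VA C A ∪ VA C Aᶜ) := ⟨A, Or.inl (mem_VA_self hA)⟩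
  let ac : ↥(VA C A ∪ VA C Aᶜ) := ⟨Aᶜ, Or.inr (mem_VA_self (hC.compl_mem hA))⟩
  have hadj : (cutGraph C A).Adj a ac :=
    (cutGraph_adj_iff hC hA (Or.inl rfl) (mem_VA_self hA)).mpr (Or.inr (Or.inr ⟨rfl, rfl⟩))
  refine (cutGraph C A).connected_iff_exists_forall_reachable.mpr ⟨a, ?_⟩
  rintro ⟨S, hS | hS⟩
  · exact cutGraph_reachable_of_mem_VA hC hA (Or.inl rfl) rfl S hS
  · exact hadj.reachable.trans (cutGraph_reachable_of_mem_VA hC hA (Or.inr rfl) (r := ac) rfl S hS)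

lemma cutGraph_isBridge_of_covIn (hC : IsCutSet C) (hA : A ∈ C) (hX : X = A ∨ X = Aᶜ)
    {v w : ↥(VA C A ∪ VA C Aᶜ)} (hvw : covIn C X v.1 w.1) :
    (cutGraph C A).IsBridge s(v, w) := by
  have hXc : Xᶜ.Nonempty := hC.nonempty (hC.compl_mem (hC.mem_of_side hA hX))
  refine isBridge_of_forall_adj_boundary (D := {u | u.1 ∈ VA C X ∧ u.1 ⊆ v.1})
    ⟨hvw.1, subset_rfl⟩ (fun hw => hvw.2.2.1.not_subset hw.2) ?_
  rintro u u' huu' ⟨hu, huv⟩ hu'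
  rcases (cutGraph_adj_iff hC hA hX hu).mp huu' with h | h | ⟨h1, -⟩
  · obtain ⟨e1, e2⟩ :=
      hC.covIn_eq_of_subset_of_not_subset hXc hvw h huv fun h' => hu' ⟨h.2.1, h'⟩
    rw [Subtype.ext e1, Subtype.ext e2]
  · exact (hu' ⟨h.1, h.2.2.1.subset.trans huv⟩).elim
  · exact (hvw.2.2.1.not_subset (hvw.2.1.2.trans (h1 ▸ huv))).elim

lemma cutGraph_isBridge_of_root (hC : IsCutSet C) (hA : A ∈ C) (hX : X = A ∨ X = Aᶜ)
    {v w : ↥(VA C A ∪ VA C Aᶜ)} (hv : v.1 = X) (hw : w.1 = Xᶜ) :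
    (cutGraph C A).IsBridge s(v, w) := by
  have hXC := hC.mem_of_side hA hX
  refine isBridge_of_forall_adj_boundary (D := {u | u.1 ∈ VA C X})
    (by show v.1 ∈ VA C X; rw [hv]; exact mem_VA_self hXC)
    (fun h => hC.notMem_VA_compl h (by rw [hw]; exact mem_VA_self (hC.compl_mem hXC))) ?_
  rintro u u' huu' hu hu'
  rcases (cutGraph_adj_iff hC hA hX hu).mp huu' with h | h | ⟨h1, h2⟩
  · exact (hu' h.2.1).elim
  · exact (hu' h.1).elim
  · rw [Subtype.ext (h1.trans hv.symm), Subtype.ext (h2.trans hw.symm)]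

lemma cutGraph_isAcyclic (hC : IsCutSet C) (hA : A ∈ C) : (cutGraph C A).IsAcyclic := by
  refine isAcyclic_iff_forall_adj_isBridge.mpr fun v w hvw => ?_
  obtain ⟨X, hX, hv⟩ := exists_side_mem_VA v
  rcases (cutGraph_adj_iff hC hA hX hv).mp hvw with h | h | ⟨h1, h2⟩
  · exact cutGraph_isBridge_of_covIn hC hA hX h
  · exact Sym2.eq_swap ▸ cutGraph_isBridge_of_covIn hC hA hX h
  · exact cutGraph_isBridge_of_root hC hA hX h1 h2

lemma ncard_neighborSet_cutGraph_of_singleton (hC : IsCutSet C) (hA : A ∈ C)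
    {u : ↥(VA C A ∪ VA C Aᶜ)} {i : α} (hi : u.1 = {i}) :
    ((cutGraph C A).neighborSet u).ncard = 1 := by
  have := hC.finite_of_mem hA
  obtain ⟨X, hX, hu⟩ := exists_side_mem_VA u
  have hXC := hC.mem_of_side hA hX
  have hXc : Xᶜ.Nonempty := hC.nonempty (hC.compl_mem hXC)
  have huX : u.1 ≠ X := fun h => by
    have := hC.two_le_ncard hXC
    rw [← h, hi, ncard_singleton] at this
    omega
  obtain ⟨P, hP⟩ := exists_covIn_of_ne hXC hu huX
  refine ncard_eq_one.mpr ⟨⟨P, mem_vertices_of_side hX hP.2.1⟩, ?_⟩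
  ext w
  refine ⟨fun huw => ?_, fun hw => ?_⟩
  · rcases (cutGraph_adj_iff hC hA hX hu).mp huw with h | h | ⟨h1, -⟩
    · exact Subtype.ext (hC.covIn_unique hXc h hP)
    · exact ((hC.nonempty_of_mem_VA h.1).ne_empty
        (ssubset_singleton_iff.mp (hi ▸ h.2.2.1))).elim
    · exact (huX h1).elim
  · rw [mem_singleton_iff.mp hw]
    exact cutGraph_adj_of_covIn hC hA hX hP

lemma exists_cutGraph_adj_not_subset (hC : IsCutSet C) (hA : A ∈ C)
    (u : ↥(VA C A ∪ VA C Aᶜ)) :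
    ∃ z, (cutGraph C A).Adj u z ∧ ¬z.1 ⊆ u.1 := by
  have := hC.finite_of_mem hA
  obtain ⟨X, hX, hu⟩ := exists_side_mem_VA u
  have hXC := hC.mem_of_side hA hX
  by_cases huX : u.1 = X
  · obtain ⟨a, ha⟩ := hC.nonempty (hC.compl_mem hXC)
    refine ⟨⟨Xᶜ, mem_vertices_of_side (side_compl hX) (mem_VA_self (hC.compl_mem hXC))⟩,
      (cutGraph_adj_iff hC hA hX hu).mpr (Or.inr (Or.inr ⟨huX, rfl⟩)), fun h => ?_⟩
    exact ha (huX ▸ h ha)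
  · obtain ⟨P, hP⟩ := exists_covIn_of_ne hXC hu huX
    exact ⟨⟨P, mem_vertices_of_side hX hP.2.1⟩, cutGraph_adj_of_covIn hC hA hX hP,
      hP.2.2.1.not_subset⟩

lemma three_le_ncard_neighborSet_cutGraph (hC : IsCutSet C) (hA : A ∈ C)
    {u : ↥(VA C A ∪ VA C Aᶜ)} (huC : u.1 ∈ C) :
    3 ≤ ((cutGraph C A).neighborSet u).ncard := by
  have := hC.finite_of_mem hA
  obtain ⟨X, hX, hu⟩ := exists_side_mem_VA u
  obtain ⟨z, hz, hzu⟩ := exists_cutGraph_adj_not_subset hC hA u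
  obtain ⟨T₁, T₂, h₁, h₂, h₁₂⟩ := exists_two_covIn hu (hC.two_le_ncard huC)
  let t₁ : ↥(VA C A ∪ VA C Aᶜ) := ⟨T₁, mem_vertices_of_side hX h₁.1⟩
  let t₂ : ↥(VA C A ∪ VA C Aᶜ) := ⟨T₂, mem_vertices_of_side hX h₂.1⟩
  have hsub : {z, t₁, t₂} ⊆ (cutGraph C A).neighborSet u := by
    rintro x (rfl | rfl | rfl)
    exacts [hz, (cutGraph_adj_of_covIn hC hA hX (w := u) h₁).symm,
      (cutGraph_adj_of_covIn hC hA hX (w := u) h₂).symm]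
  have hthree : ({z, t₁, t₂} : Set ↥(VA C A ∪ VA C Aᶜ)).ncard = 3 :=
    ncard_eq_three.mpr ⟨z, t₁, t₂, fun h => hzu (h ▸ h₁.2.2.1.subset),
      fun h => hzu (h ▸ h₂.2.2.1.subset), fun h => h₁₂ (congrArg Subtype.val h), rfl⟩
  exact hthree ▸ ncard_le_ncard hsub

end CutGraph

theorem stmt10_general {α : Type*}
    (C : Set (Set α)) (hC : IsCutSet C) (A : Set α) (hA : A ∈ C) :
    (cutGraph C A).IsTree ∧
    (∀ S : ↥(VA C A ∪ VA C Aᶜ), (((cutGraph C A).neighborSet S).ncard ≠ 2)) ∧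
    ∀ S : ↥(VA C A ∪ VA C Aᶜ),
      ((cutGraph C A).neighborSet S).ncard = 1 ↔ ∃ i : α, S.1 = {i} := by
  have hcases (S : ↥(VA C A ∪ VA C Aᶜ)) : S.1 ∈ C ∨ ∃ i : α, S.1 = {i} :=
    S.2.elim (·.1) (·.1)
  refine ⟨⟨cutGraph_connected hC hA, cutGraph_isAcyclic hC hA⟩, fun S => ?_, fun S => ?_⟩
  · rcases hcases S with hS | ⟨i, hi⟩
    · have := three_le_ncard_neighborSet_cutGraph hC hA hS
      omega
    · rw [ncard_neighborSet_cutGraph_of_singleton hC hA hi]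
      decide
  · refine ⟨fun h => (hcases S).resolve_left fun hS => ?_,
      fun ⟨_, hi⟩ => ncard_neighborSet_cutGraph_of_singleton hC hA hi⟩
    have := three_le_ncard_neighborSet_cutGraph hC hA hS
    omega

/-- for a phylogenetic set of cuts `C` and a cut `c = (A | Aᶜ) ∈ C`, the
cut graph `G_{C,c}` is a phylogenetic tree whose leaves are exactly the singletons
`{i}` for `i ∈ α`. -/
theorem stmt10 {α : Type*} [Fintype α] (hcard : 3 ≤ Fintype.card α)
    (C : Set (Set α)) (hC : IsCutSet C) (A : Set α) (hA : A ∈ C) :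
    (cutGraph C A).IsTree ∧
    (∀ S : ↥(VA C A ∪ VA C Aᶜ), (((cutGraph C A).neighborSet S).ncard ≠ 2)) ∧
    ∀ S : ↥(VA C A ∪ VA C Aᶜ),
      ((cutGraph C A).neighborSet S).ncard = 1 ↔ ∃ i : α, S.1 = {i} :=
  stmt10_general C hC A hA
end
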